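/- The standard interpolating coefficients solve the covariance linear system: let H_1, H_2 be real functions on [T_0,T_n] with K_D(s,t) = H_1(min(s,t)) H_2(max(s,t)), and assume the denominators H_1(T_{i+1})H_2(T_i) - H_1(T_i)H_2(T_{i+1}) are nonzero. Define f_0, ..., f_n piecewise as in the standard AP (f_i supported on [T_{i-1},T_{i+1}] with the explicit ratio formulas). Then for every x ∈ [T_0,T_n] and every i = 0,...,n: ∑_{j=0}^n f_j(x) K_D(T_i, T_j) = K_D(x, T_i). -/
import Mathlib


open Set Finset

/-- The standard interpolating coefficients solve the covariance linear system:
with `K(s,t) = H₁(min s t) * H₂(max s t)` and the piecewise-defined standard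
coefficients `f 0, …, f n` (with nonzero denominators), one has, for every
`x ∈ [T 0, T n]` and every `i ≤ n`,
`∑_{j=0}^{n} f j x * K (T i) (T j) = K x (T i)`. -/
theorem standard_coeffs_solve_covariance_system
    (n : ℕ) (hn : 1 ≤ n) (T : ℕ → ℝ) (hT : ∀ i, i < n → T i < T (i + 1))
    (H₁ H₂ : ℝ → ℝ)
    (K : ℝ → ℝ → ℝ)
    (hK : ∀ s t, K s t = H₁ (min s t) * H₂ (max s t))
    (hden : ∀ i, i < n →
      H₁ (T (i + 1)) * H₂ (T i) - H₁ (T i) * H₂ (T (i + 1)) ≠ 0)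
    (f : ℕ → ℝ → ℝ)
    (hf0 : ∀ x, f 0 x = Set.indicator (Set.Icc (T 0) (T 1))
      (fun y => (H₁ (T 1) * H₂ y - H₁ y * H₂ (T 1)) /
        (H₁ (T 1) * H₂ (T 0) - H₁ (T 0) * H₂ (T 1))) x)
    (hfn : ∀ x, f n x = Set.indicator (Set.Ioc (T (n - 1)) (T n))
      (fun y => (H₁ y * H₂ (T (n - 1)) - H₁ (T (n - 1)) * H₂ y) /
        (H₁ (T n) * H₂ (T (n - 1)) - H₁ (T (n - 1)) * H₂ (T n))) x)
    (hfm : ∀ i, 1 ≤ i → i < n → ∀ x, f i x =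
      Set.indicator (Set.Icc (T (i - 1)) (T i))
        (fun y => (H₁ y * H₂ (T (i - 1)) - H₁ (T (i - 1)) * H₂ y) /
          (H₁ (T i) * H₂ (T (i - 1)) - H₁ (T (i - 1)) * H₂ (T i))) x
      + Set.indicator (Set.Ioc (T i) (T (i + 1)))
        (fun y => (H₁ (T (i + 1)) * H₂ y - H₁ y * H₂ (T (i + 1))) /
          (H₁ (T (i + 1)) * H₂ (T i) - H₁ (T i) * H₂ (T (i + 1)))) x) :
    ∀ x ∈ Set.Icc (T 0) (T n), ∀ i, i ≤ n →
      ∑ j ∈ Finset.range (n + 1), f j x * K (T i) (T j) = K x (T i) := by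
  intro x hx i hi
  -- monotonicity of T on {0,...,n}
  have hmono : ∀ a b, a ≤ b → b ≤ n → T a ≤ T b := by
    intro a b hab hbn
    induction b, hab using Nat.le_induction with
    | base => exact le_refl _
    | succ m hm ih =>
      exact le_trans (ih (by omega)) (le_of_lt (hT m (by omega)))
  have hslt : ∀ a b, a < b → b ≤ n → T a < T b := by
    intro a b hab hbn
    have h1 : T (b - 1) < T b := by
      have := hT (b - 1) (by omega)
      have hb : b - 1 + 1 = b := by omega
      rwa [hb] at this
    exact lt_of_le_of_lt (hmono a (b - 1) (by omega) (by omega)) h1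
  rcases eq_or_lt_of_le hx.1 with hx0 | hx0
  · -- x = T 0
    have h0i : T 0 ≤ T i := hmono 0 i (Nat.zero_le _) hi
    rw [Finset.sum_eq_single_of_mem 0 (by simp)]
    · rw [hf0, ← hx0, Set.indicator_of_mem (Set.mem_Icc.mpr
        ⟨le_refl _, le_of_lt (hslt 0 1 one_pos hn)⟩)]
      rw [div_self (by simpa using hden 0 hn), one_mul, hK, hK,
        min_eq_right h0i, max_eq_left h0i, min_eq_left h0i, max_eq_right h0i]
    · intro j hj hj0
      have hjn : j ≤ n := by
        have := Finset.mem_range.mp hj; omega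
      have hfj : f j x = 0 := by
        rw [← hx0]
        rcases Nat.lt_or_ge j n with hjlt | hjge
        · rcases Nat.lt_or_ge 1 j with h2 | h2
          · rw [hfm j (by omega) hjlt,
              Set.indicator_of_notMem (fun hmem =>
                absurd hmem.1 (not_le.mpr (hslt 0 (j - 1) (by omega) (by omega)))),
              Set.indicator_of_notMem (fun hmem =>
                absurd hmem.1 (not_lt.mpr (hmono 0 j (by omega) (by omega))))]
            simp
          · have hj1 : j = 1 := by omega
            subst hj1
            rw [hfm 1 (le_refl _) hjlt,
              Set.indicator_of_mem (Set.mem_Icc.mpr ⟨le_of_eq (by norm_num),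
                le_of_lt (hslt 0 1 one_pos (by omega))⟩),
              Set.indicator_of_notMem (fun hmem =>
                absurd hmem.1 (not_lt.mpr (hmono 0 1 (by omega) (by omega))))]
            norm_num
        · have hjn' : j = n := by omega
          subst hjn'
          rw [hfn, Set.indicator_of_notMem (fun hmem =>
            absurd hmem.1 (not_lt.mpr (hmono 0 (j - 1) (by omega) (by omega))))]
      rw [hfj, zero_mul]
  · -- T 0 < x : find k with T k < x ≤ T (k+1)
    have hex : ∃ k, k < n ∧ T k < x ∧ x ≤ T (k + 1) := by
      by_contra hcon
      push_neg at hcon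
      have hall : ∀ m, m ≤ n → T m < x := by
        intro m hm
        induction m with
        | zero => exact hx0
        | succ p ih => exact hcon p (by omega) (ih (by omega))
      exact absurd hx.2 (not_le.mpr (hall n (le_refl n)))
    obtain ⟨k, hk, hkx, hxk⟩ := hex
    set D : ℝ := H₁ (T (k + 1)) * H₂ (T k) - H₁ (T k) * H₂ (T (k + 1)) with hDdef
    have hD : D ≠ 0 := hden k hk
    have hfk : f k x = (H₁ (T (k + 1)) * H₂ x - H₁ x * H₂ (T (k + 1))) / D := by
      rcases Nat.eq_zero_or_pos k with rfl | hk1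
      · rw [hf0, Set.indicator_of_mem (Set.mem_Icc.mpr ⟨le_of_lt hx0, hxk⟩)]
      · rw [hfm k hk1 hk,
          Set.indicator_of_notMem (fun hmem => absurd hmem.2 (not_le.mpr hkx)),
          Set.indicator_of_mem (Set.mem_Ioc.mpr ⟨hkx, hxk⟩), zero_add]
    have hfk1 : f (k + 1) x = (H₁ x * H₂ (T k) - H₁ (T k) * H₂ x) / D := by
      rcases eq_or_lt_of_le (Nat.succ_le_of_lt hk) with heq | hlt
      · have h := hfn x
        rw [show n - 1 = k from by omega, ← heq] at h
        rw [h, Set.indicator_of_mem (Set.mem_Ioc.mpr ⟨hkx, hxk⟩)]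
      · have hks : k + 1 - 1 = k := by omega
        rw [hfm (k + 1) (by omega) hlt,
          Set.indicator_of_mem (by rw [hks]; exact Set.mem_Icc.mpr ⟨le_of_lt hkx, hxk⟩),
          Set.indicator_of_notMem (fun hmem => absurd hmem.1 (not_lt.mpr hxk)),
          add_zero, hks]
    have hpair : ({k, k + 1} : Finset ℕ) ⊆ Finset.range (n + 1) := by
      intro j hj
      simp only [Finset.mem_insert, Finset.mem_singleton] at hj
      rcases hj with rfl | rfl <;> simp <;> omega
    have hzero : ∀ j ∈ Finset.range (n + 1), j ∉ ({k, k + 1} : Finset ℕ) →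
        f j x * K (T i) (T j) = 0 := by
      intro j hj hjne
      have hjn : j ≤ n := by have := Finset.mem_range.mp hj; omega
      simp only [Finset.mem_insert, Finset.mem_singleton, not_or] at hjne
      obtain ⟨hjk, hjk1⟩ := hjne
      have hfj : f j x = 0 := by
        rcases Nat.lt_or_ge j k with hlt | hge
        · -- j < k : x > T k ≥ T (j+1)
          have hx1 : T (j + 1) < x := lt_of_le_of_lt (hmono (j + 1) k (by omega) (by omega)) hkx
          rcases Nat.eq_zero_or_pos j with rfl | hj1
          · rw [hf0, Set.indicator_of_notMem (fun hmem =>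
              absurd hmem.2 (not_le.mpr hx1))]
          · rw [hfm j hj1 (by omega),
              Set.indicator_of_notMem (fun hmem => absurd hmem.2
                (not_le.mpr (lt_of_le_of_lt (hmono j k (by omega) (by omega)) hkx))),
              Set.indicator_of_notMem (fun hmem =>
                absurd hmem.2 (not_le.mpr hx1))]
            simp
        · -- j ≥ k + 2
          have hge2 : k + 2 ≤ j := by omega
          have hxj1 : x ≤ T (j - 1) := le_trans hxk (hmono (k + 1) (j - 1) (by omega) (by omega))
          have hxj : x ≤ T j := le_trans hxj1 (hmono (j - 1) j (by omega) hjn)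
          rcases Nat.lt_or_ge j n with hjlt | hjge
          · rw [hfm j (by omega) hjlt,
              Set.indicator_apply, Set.indicator_apply]
            split_ifs with h1 h2 h2
            · exact absurd h2.1 (not_lt.mpr hxj)
            · have hxe : T (j - 1) = x := le_antisymm h1.1 hxj1
              rw [hxe]
              simp
            · exact absurd h2.1 (not_lt.mpr hxj)
            · simp
          · have hjn' : j = n := by omega
            subst hjn'
            rw [hfn, Set.indicator_of_notMem (fun hmem =>
              absurd hmem.1 (not_lt.mpr hxj1))]
      rw [hfj, zero_mul]
    rw [← Finset.sum_subset hpair hzero,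
      Finset.sum_pair (show k ≠ k + 1 by omega), hfk, hfk1, hK, hK, hK]
    rcases Nat.lt_or_ge i (k + 1) with hik | hik
    · -- i ≤ k
      have h1 : T i ≤ T k := hmono i k (by omega) (by omega)
      have h2 : T i ≤ T (k + 1) := hmono i (k + 1) (by omega) hk
      have h3 : T i < x := lt_of_le_of_lt h1 hkx
      rw [min_eq_left h1, max_eq_right h1, min_eq_left h2, max_eq_right h2,
        min_eq_right (le_of_lt h3), max_eq_left (le_of_lt h3)]
      field_simp
      ring
    · -- i ≥ k + 1
      have h1 : T k ≤ T i := hmono k i (by omega) hi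
      have h2 : T (k + 1) ≤ T i := hmono (k + 1) i hik hi
      have h3 : x ≤ T i := le_trans hxk h2
      rw [min_eq_right h1, max_eq_left h1, min_eq_right h2, max_eq_left h2,
        min_eq_left h3, max_eq_right h3]
      field_simp
      ring
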